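/- Let γ be a 2n×2n real symmetric matrix with γ ≥ iσ_{2n} (σ_{2n} = [[0,I_n],[-I_n,0]]). Then all symplectic eigenvalues of γ, i.e., the positive square roots of the eigenvalues of -σ_{2n} γ σ_{2n} γ, are greater than or equal to 1. -/

import Mathlib

/-! With `K = iσ` (Hermitian, `K² = 1`) and `G` the complexification of `γ`, the matrix
`-σγσγ` is `(KG)²`, so each of its eigenvalues is `c²` for an eigenvalue `c` of `KG`, that is
`Gv = c Kv` for some `v ≠ 0`. The hypothesis `G - K ≥ 0` and its transpose `G + K ≥ 0`, tested
against `v`, give `|v*Kv| ≤ v*Gv = c v*Kv` with both forms real. Hence `c` is real with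
`|c| ≥ 1`, unless `v*Kv = 0`; then `v` lies in the kernel of `G - K`, which forces `c = 1`. -/

open Matrix Complex ComplexOrder

/-- The standard symplectic form `[[0, I_n], [-I_n, 0]]` on `n` modes. -/
def sympForm (n : ℕ) : Matrix (Fin n ⊕ Fin n) (Fin n ⊕ Fin n) ℝ :=
  Matrix.fromBlocks 0 1 (-1) 0

namespace Matrix

variable {m : Type*} [Fintype m]

theorem map_ofReal_mul {l n : Type*} (A : Matrix l m ℝ) (B : Matrix m n ℝ) :
    (A * B).map ofReal = A.map ofReal * B.map ofReal :=
  Matrix.map_mul (f := ofRealHom)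

theorem exists_mulVec_eq_smul_of_mem_spectrum {K : Type*} [Field K] [DecidableEq m]
    {A : Matrix m m K} {μ : K} (hμ : μ ∈ spectrum K A) : ∃ v ≠ 0, A *ᵥ v = μ • v := by
  rw [← spectrum_toLin', ← Module.End.hasEigenvalue_iff_mem_spectrum] at hμ
  obtain ⟨v, hv⟩ := hμ.exists_hasEigenvector
  exact ⟨v, hv.2, hv.apply_eq_smul⟩

theorem exists_real_one_le_abs_of_mulVec_eq_smul_mulVec {A K : Matrix m m ℂ}
    (hsub : (A - K).PosSemidef) (hadd : (A + K).PosSemidef) {c : ℂ} {v : m → ℂ}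
    (hv : A *ᵥ v = c • K *ᵥ v) (hKv : K *ᵥ v ≠ 0) : ∃ r : ℝ, c = r ∧ 1 ≤ |r| := by
  set g := star v ⬝ᵥ A *ᵥ v
  set s := star v ⬝ᵥ K *ᵥ v
  have hgs : g = c * s := by simp only [g, s, hv, dotProduct_smul, smul_eq_mul]
  have hsub' : 0 ≤ g - s := by
    simpa only [sub_mulVec, dotProduct_sub] using hsub.dotProduct_mulVec_nonneg v
  have hadd' : 0 ≤ g + s := by
    simpa only [add_mulVec, dotProduct_add] using hadd.dotProduct_mulVec_nonneg v
  rw [Complex.nonneg_iff] at hsub' hadd'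
  simp only [sub_re, sub_im, add_re, add_im] at hsub' hadd'
  have hg_real : (g.re : ℂ) = g := Complex.ext rfl (by rw [ofReal_im]; linarith)
  have hs_real : (s.re : ℂ) = s := Complex.ext rfl (by rw [ofReal_im]; linarith)
  by_cases hs : s = 0
  · have hker : (A - K) *ᵥ v = 0 := by
      refine (hsub.dotProduct_mulVec_zero_iff v).1 ?_
      rw [sub_mulVec, dotProduct_sub]
      change g - s = 0
      simp [hgs, hs]
    have hc : (c - 1) • K *ᵥ v = 0 := by
      rw [sub_smul, ← hv, one_smul, ← sub_mulVec, hker]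
    refine ⟨1, ?_, by simp⟩
    simpa [sub_eq_zero] using (smul_eq_zero.1 hc).resolve_right hKv
  · have hs_re : s.re ≠ 0 := fun h => hs (by rw [← hs_real, h, ofReal_zero])
    refine ⟨g.re / s.re, ?_, ?_⟩
    · rw [ofReal_div, hg_real, hs_real, hgs, mul_div_cancel_right₀ _ hs]
    · rw [abs_div, one_le_div (abs_pos.2 hs_re)]
      exact (abs_le.2 ⟨by linarith, by linarith⟩).trans (le_abs_self _)

end Matrix

theorem sympForm_mul_self (n : ℕ) : sympForm n * sympForm n = -1 := by
  simp [sympForm, fromBlocks_multiply, ← fromBlocks_one, fromBlocks_neg]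

theorem sympForm_transpose (n : ℕ) : (sympForm n)ᵀ = -sympForm n := by
  simp [sympForm, fromBlocks_transpose, fromBlocks_neg]

/-- If `γ` is real symmetric with `γ ≥ iσ_{2n}`, then every eigenvalue of
`-σ_{2n} γ σ_{2n} γ` is real and `≥ 1`; i.e. all symplectic eigenvalues of `γ` (the
positive square roots of those eigenvalues) are `≥ 1`. -/
theorem symplectic_eigenvalues_ge_one (n : ℕ)
    (γ : Matrix (Fin n ⊕ Fin n) (Fin n ⊕ Fin n) ℝ) (hγ : γ.IsSymm)
    (h : ((γ.map Complex.ofReal) - Complex.I • ((sympForm n).map Complex.ofReal)).PosSemidef) :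
    ∀ μ ∈ spectrum ℂ ((-(sympForm n * γ * sympForm n * γ)).map Complex.ofReal),
      μ.im = 0 ∧ 1 ≤ μ.re := by
  intro μ hμ
  set G := γ.map ofReal
  set K := I • (sympForm n).map ofReal
  have hKK : K * K = 1 := by
    rw [smul_mul_smul_comm, I_mul_I, ← map_ofReal_mul, sympForm_mul_self,
      Matrix.map_neg _ ofReal_neg, Matrix.map_one _ ofReal_zero ofReal_one, neg_one_smul, neg_neg]
  have hadd : (G + K).PosSemidef := by
    simpa [K, G, ← transpose_map, hγ.eq, sympForm_transpose, Matrix.map_neg] using h.transpose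
  have hsq : (-(sympForm n * γ * sympForm n * γ)).map ofReal = (K * G) ^ 2 := by
    simp [K, G, sq, map_ofReal_mul, Matrix.map_neg, mul_assoc, smul_smul]
  rw [hsq, spectrum.map_pow_of_pos _ two_pos] at hμ
  obtain ⟨c, hc, rfl⟩ := hμ
  obtain ⟨v, hv0, hv⟩ := exists_mulVec_eq_smul_of_mem_spectrum hc
  have hGv : G *ᵥ v = c • K *ᵥ v := by
    rw [← mulVec_smul, ← hv, mulVec_mulVec, ← mul_assoc, hKK, one_mul]
  have hKv : K *ᵥ v ≠ 0 := fun hKv => hv0 (by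
    rw [← one_mulVec v, ← hKK, ← mulVec_mulVec, hKv, mulVec_zero])
  obtain ⟨r, rfl, hr⟩ := exists_real_one_le_abs_of_mulVec_eq_smul_mulVec h hadd hGv hKv
  simpa [← ofReal_pow, one_le_sq_iff_one_le_abs] using hr
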